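/- Let f be a feasible flow over time in a single-sink network and let T be an induced subgraph that is sink-like on an interval [θ1, θ2]. Then for every time θ ∈ [θ1, θ2], every node v ∈ V(T) and every v-t path P that is active at time θ, P is a physically shortest v-t path. -/

import Mathlib

open MeasureTheory Set

noncomputable section

/-- A single-sink network: a finite directed graph with integer travel times and
capacities on the edges, a sink node, and network inflow rates at the nodes
supported in `[0, theta0]`. -/
structure Network where
  V : Type
  E : Type
  fintypeV : Fintype V
  decV : DecidableEq V
  fintypeE : Fintype E
  decE : DecidableEq E
  src : E → V
  dst : E → V
  sink : V
  tau : E → ℕ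
  nu : E → ℕ
  tau_pos : ∀ e, 1 ≤ tau e
  nu_pos : ∀ e, 1 ≤ nu e
  theta0 : ℝ
  theta0_nonneg : 0 ≤ theta0
  u : V → ℝ → ℝ
  u_nonneg : ∀ v θ, 0 ≤ u v θ
  u_sink : ∀ θ, u sink θ = 0
  u_integrable : ∀ v, MeasureTheory.Integrable (u v) MeasureTheory.volume
  u_support : ∀ v θ, θ ∉ Set.Icc 0 theta0 → u v θ = 0

attribute [instance] Network.fintypeV Network.decV Network.fintypeE Network.decE

namespace Network

variable (N : Network)

/-- `N.IsWalkBetween v w p` : the list of edges `p` forms a walk from `v` to `w`. -/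
def IsWalkBetween : N.V → N.V → List N.E → Prop
  | v, w, [] => v = w
  | v, w, e :: p => N.src e = v ∧ IsWalkBetween (N.dst e) w p

/-- A walk from `v` to the sink. -/
def IsWalk (v : N.V) (p : List N.E) : Prop := N.IsWalkBetween v N.sink p

/-- The sink is reachable from every node. -/
def Reachable : Prop := ∀ v : N.V, ∃ p, N.IsWalk v p

/-- The graph has no (nonempty) cycles. -/
def Acyclic : Prop := ∀ v p, N.IsWalkBetween v v p → p = []

/-- Total travel time `τ(G)` of the network. -/
def tauSum : ℝ := ∑ e, (N.tau e : ℝ)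

/-- Physical length of a path. -/
def pathTau (p : List N.E) : ℝ := (p.map fun e => (N.tau e : ℝ)).sum

/-- `τ(P_max)`: the maximum physical length of a simple path ending at the sink. -/
def tauPmax : ℝ :=
  sSup { x | ∃ v p, N.IsWalk v p ∧ (v :: p.map N.dst).Nodup ∧ x = N.pathTau p }

/-- Edges leaving `v`. -/
def outEdges (v : N.V) : Finset N.E := Finset.univ.filter fun e => N.src e = v

/-- Edges entering `v`. -/
def inEdges (v : N.V) : Finset N.E := Finset.univ.filter fun e => N.dst e = v

/-- Cumulative network inflow `U_v(θ)`. -/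
def cumInflow (v : N.V) (θ : ℝ) : ℝ := ∫ ζ in (0:ℝ)..θ, N.u v ζ

/-- Total inflow volume `U`. -/
def totalInflow : ℝ := ∑ v ∈ Finset.univ.erase N.sink, N.cumInflow v N.theta0

/-- `p` is a physically shortest `v`-`t` path. -/
def PhysShortest (v : N.V) (p : List N.E) : Prop :=
  N.IsWalk v p ∧ ∀ p', N.IsWalk v p' → N.pathTau p ≤ N.pathTau p'

/-- Physical distance from `v` to the sink. -/
def physDist (v : N.V) : ℝ := sInf { x | ∃ p, N.IsWalk v p ∧ x = N.pathTau p }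

/-- `E(T)`: edges with both endpoints in `T`. -/
def edgesIn (T : Finset N.V) : Finset N.E :=
  Finset.univ.filter fun e => N.src e ∈ T ∧ N.dst e ∈ T

/-- `δ⁻_T`: edges entering `T`. -/
def deltaMinus (T : Finset N.V) : Finset N.E :=
  Finset.univ.filter fun e => N.src e ∉ T ∧ N.dst e ∈ T

/-- `δ⁺_T`: edges leaving `T`. -/
def deltaPlus (T : Finset N.V) : Finset N.E :=
  Finset.univ.filter fun e => N.src e ∈ T ∧ N.dst e ∉ T

/-- A flow over time: nonnegative, locally integrable edge in- and outflow rates,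
vanishing for negative times. -/
structure Flow (N : Network) where
  fp : N.E → ℝ → ℝ
  fm : N.E → ℝ → ℝ
  fp_nonneg : ∀ e θ, 0 ≤ fp e θ
  fm_nonneg : ∀ e θ, 0 ≤ fm e θ
  fp_zero : ∀ e θ, θ < 0 → fp e θ = 0
  fp_locInt : ∀ e, MeasureTheory.LocallyIntegrable (fp e) MeasureTheory.volume
  fm_locInt : ∀ e, MeasureTheory.LocallyIntegrable (fm e) MeasureTheory.volume

namespace Flow

variable {N : Network} (f : N.Flow)

/-- Cumulative edge inflow `F⁺_e`. -/
def Fp (e : N.E) (θ : ℝ) : ℝ := ∫ ζ in (0:ℝ)..θ, f.fp e ζ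

/-- Cumulative edge outflow `F⁻_e`. -/
def Fm (e : N.E) (θ : ℝ) : ℝ := ∫ ζ in (0:ℝ)..θ, f.fm e ζ

/-- Queue length `q_e(θ) = F⁺_e(θ) - F⁻_e(θ + τ_e)`. -/
def queue (e : N.E) (θ : ℝ) : ℝ := f.Fp e θ - f.Fm e (θ + (N.tau e : ℝ))

/-- Edge load `F^Δ_e(θ) = F⁺_e(θ) - F⁻_e(θ)`. -/
def load (e : N.E) (θ : ℝ) : ℝ := f.Fp e θ - f.Fm e θ

/-- Total flow volume in the network `F^Δ(θ)`. -/
def totalLoad (θ : ℝ) : ℝ := ∑ e, f.load e θ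

/-- Flow volume having reached the sink, `Z(θ)`. -/
def Z (θ : ℝ) : ℝ :=
  ∑ e ∈ N.inEdges N.sink, f.Fm e θ - ∑ e ∈ N.outEdges N.sink, f.Fp e θ

/-- Instantaneous travel time `c_e(θ) = τ_e + q_e(θ)/ν_e`. -/
def c (e : N.E) (θ : ℝ) : ℝ := (N.tau e : ℝ) + f.queue e θ / (N.nu e : ℝ)

/-- Node label `ℓ_v(θ)`: instantaneous distance from `v` to the sink. -/
def label (v : N.V) (θ : ℝ) : ℝ :=
  sInf { x | ∃ p, N.IsWalk v p ∧ x = (p.map fun e => f.c e θ).sum }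

/-- Edge `e` is active at time `θ`. -/
def Active (e : N.E) (θ : ℝ) : Prop :=
  f.label (N.src e) θ = f.label (N.dst e) θ + f.c e θ

/-- `p` is an active `v`-`t` path at time `θ`. -/
def ActivePath (v : N.V) (p : List N.E) (θ : ℝ) : Prop :=
  N.IsWalk v p ∧ ∀ e ∈ p, f.Active e θ

/-- Feasibility of a flow over time: flow conservation at non-sink nodes,
nonpositive excess at the sink, no outflow before `τ_e`, and queues operating
at capacity. -/
def Feasible : Prop :=
  (∀ v, v ≠ N.sink → ∀ᵐ θ ∂(volume : Measure ℝ), 0 ≤ θ →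
      (∑ e ∈ N.outEdges v, f.fp e θ) - ∑ e ∈ N.inEdges v, f.fm e θ = N.u v θ) ∧
  (∀ᵐ θ ∂(volume : Measure ℝ), 0 ≤ θ →
      (∑ e ∈ N.outEdges N.sink, f.fp e θ) - ∑ e ∈ N.inEdges N.sink, f.fm e θ ≤ 0) ∧
  (∀ e θ, θ < (N.tau e : ℝ) → f.fm e θ = 0) ∧
  (∀ e, ∀ᵐ θ ∂(volume : Measure ℝ), 0 ≤ θ →
      (0 < f.queue e θ → f.fm e (θ + (N.tau e : ℝ)) = (N.nu e : ℝ)) ∧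
      (f.queue e θ ≤ 0 → f.fm e (θ + (N.tau e : ℝ)) = min (f.fp e θ) (N.nu e : ℝ)))

/-- Instantaneous dynamic equilibrium: a feasible flow only using active edges. -/
def IsIDE : Prop :=
  f.Feasible ∧ ∀ e, ∀ᵐ θ ∂(volume : Measure ℝ), 0 ≤ θ → 0 < f.fp e θ → f.Active e θ

/-- The flow terminates. -/
def Terminates : Prop := ∃ θ, N.theta0 ≤ θ ∧ f.totalLoad θ = 0

/-- Makespan `Θ(f)`. -/
def makespan : ℝ := sInf { θ | N.theta0 ≤ θ ∧ f.totalLoad θ = 0 }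

/-- Total travel time `Ψ(f)`. -/
def totalTravelTime : ℝ := ∑ e, ∫ θ in Set.Ici (0:ℝ), f.c e θ * f.fp e θ

/-- The induced subgraph on `T` is sink-like on `[θ1, θ2]`. -/
def SinkLike (T : Finset N.V) (θ1 θ2 : ℝ) : Prop :=
  N.sink ∈ T ∧
  (∀ v ∈ T, ∀ p, N.PhysShortest v p → ∀ e ∈ p, N.src e ∈ T ∧ N.dst e ∈ T) ∧
  (∑ e ∈ N.edgesIn T, f.load e θ1) +
    (∑ e ∈ N.deltaMinus T, (f.Fm e θ2 - f.Fm e θ1)) +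
    (∑ v ∈ T.erase N.sink, ∫ θ in θ1..θ2, N.u v θ) < 1/2

end Flow

end Network

namespace Network
namespace Flow

open intervalIntegral

variable {N : Network} (f : N.Flow)

lemma fp_intInt (e : N.E) (a b : ℝ) : IntervalIntegrable (f.fp e) volume a b :=
  intervalIntegrable_iff.mpr
    (((f.fp_locInt e).integrableOn_isCompact isCompact_uIcc).mono_set Set.uIoc_subset_uIcc)

lemma fm_intInt (e : N.E) (a b : ℝ) : IntervalIntegrable (f.fm e) volume a b :=
  intervalIntegrable_iff.mpr
    (((f.fm_locInt e).integrableOn_isCompact isCompact_uIcc).mono_set Set.uIoc_subset_uIcc)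

lemma Fp_sub (e : N.E) (a b : ℝ) :
    f.Fp e b - f.Fp e a = ∫ ζ in a..b, f.fp e ζ := by
  rw [Fp, Fp, intervalIntegral.integral_interval_sub_left (f.fp_intInt e 0 b) (f.fp_intInt e 0 a)]

lemma Fm_sub (e : N.E) (a b : ℝ) :
    f.Fm e b - f.Fm e a = ∫ ζ in a..b, f.fm e ζ := by
  rw [Fm, Fm, intervalIntegral.integral_interval_sub_left (f.fm_intInt e 0 b) (f.fm_intInt e 0 a)]

lemma Fm_mono (e : N.E) {a b : ℝ} (h : a ≤ b) : f.Fm e a ≤ f.Fm e b := by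
  have := f.Fm_sub e a b
  have h2 : 0 ≤ ∫ ζ in a..b, f.fm e ζ :=
    intervalIntegral.integral_nonneg h (fun u _ => f.fm_nonneg e u)
  linarith

lemma ae_ne' (c : ℝ) : ∀ᵐ x : ℝ ∂volume, x ≠ c := by
  have : volume ({c} : Set ℝ) = 0 := measure_singleton c
  filter_upwards [MeasureTheory.compl_mem_ae_iff.mpr this] with x hx
  simpa using hx

lemma Fm_eq_zero (hf3 : ∀ e θ, θ < (N.tau e : ℝ) → f.fm e θ = 0)
    (e : N.E) {θ : ℝ} (h : θ ≤ (N.tau e : ℝ)) : f.Fm e θ = 0 := by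
  have hτ : (0:ℝ) ≤ (N.tau e : ℝ) := Nat.cast_nonneg _
  have : ∫ x in (0:ℝ)..θ, f.fm e x = ∫ x in (0:ℝ)..θ, (0:ℝ) := by
    apply intervalIntegral.integral_congr_ae
    filter_upwards [Network.Flow.ae_ne' (N.tau e : ℝ)] with x hx hxI
    have hx2 : x ≤ max 0 θ := hxI.2
    have : x < (N.tau e : ℝ) := lt_of_le_of_ne (le_trans hx2 (max_le hτ h)) hx
    exact hf3 e x this
  simpa [Fm] using this

lemma Fp_eq_zero (e : N.E) {θ : ℝ} (h : θ ≤ 0) : f.Fp e θ = 0 := by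
  have : ∫ x in (0:ℝ)..θ, f.fp e x = ∫ x in (0:ℝ)..θ, (0:ℝ) := by
    apply intervalIntegral.integral_congr_ae
    filter_upwards [Network.Flow.ae_ne' 0] with x hx hxI
    have hx2 : x ≤ max 0 θ := hxI.2
    have : x < 0 := lt_of_le_of_ne (le_trans hx2 (max_le le_rfl h)) hx
    exact f.fp_zero e x this
  simpa [Fp] using this

lemma queue_continuous (e : N.E) : Continuous (f.queue e) := by
  have h1 : Continuous (f.Fp e) := intervalIntegral.continuous_primitive (f.fp_intInt e) 0
  have h2 : Continuous (f.Fm e) := intervalIntegral.continuous_primitive (f.fm_intInt e) 0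
  exact h1.sub (h2.comp (continuous_id.add continuous_const))

end Flow
end Network
namespace Network
namespace Flow

variable {N : Network} (f : N.Flow)

lemma fm_comp_intInt (e : N.E) (a b : ℝ) :
    IntervalIntegrable (fun ζ => f.fm e (ζ + (N.tau e : ℝ))) volume a b := by
  have := (f.fm_intInt e (a + (N.tau e : ℝ)) (b + (N.tau e : ℝ))).comp_add_right (N.tau e : ℝ)
  simpa using this

lemma queue_sub (e : N.E) (a b : ℝ) :
    f.queue e b - f.queue e a = ∫ ζ in a..b, (f.fp e ζ - f.fm e (ζ + (N.tau e : ℝ))) := by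
  rw [intervalIntegral.integral_sub (f.fp_intInt e a b) (f.fm_comp_intInt e a b)]
  rw [intervalIntegral.integral_comp_add_right (f.fm e) ((N.tau e : ℝ))]
  have h1 := f.Fp_sub e a b
  have h2 := f.Fm_sub e (a + (N.tau e : ℝ)) (b + (N.tau e : ℝ))
  simp only [queue]
  linarith

lemma queue_nonneg (hf : f.Feasible) (e : N.E) (θ : ℝ) : 0 ≤ f.queue e θ := by
  have hf3 := hf.2.2.1
  have hτ : (0:ℝ) ≤ (N.tau e : ℝ) := Nat.cast_nonneg _
  have hzero : ∀ θ' ≤ (0:ℝ), f.queue e θ' = 0 := by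
    intro θ' h
    have h1 : f.Fp e θ' = 0 := f.Fp_eq_zero e h
    have h2 : f.Fm e (θ' + (N.tau e : ℝ)) = 0 :=
      f.Fm_eq_zero hf3 e (by linarith)
    simp [queue, h1, h2]
  rcases le_or_gt θ 0 with h | hθpos
  · rw [hzero θ h]
  by_contra hneg
  push_neg at hneg
  set S := Set.Icc 0 θ ∩ (f.queue e) ⁻¹' Set.Ici 0 with hSdef
  have hS0 : (0:ℝ) ∈ S := ⟨⟨le_refl _, le_of_lt hθpos⟩, by simp [hzero 0 le_rfl]⟩
  have hScomp : IsCompact S :=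
    isCompact_Icc.inter_right (isClosed_Ici.preimage (f.queue_continuous e))
  have hs_mem : sSup S ∈ S := hScomp.sSup_mem ⟨0, hS0⟩
  set s := sSup S with hs
  obtain ⟨⟨hs0, hsθ⟩, hqs⟩ := hs_mem
  have hqs' : 0 ≤ f.queue e s := hqs
  have hub : ∀ ζ, ζ ∈ Set.Ioc s θ → f.queue e ζ < 0 := by
    rintro ζ ⟨h1, h2⟩
    by_contra h
    push_neg at h
    have hmem : ζ ∈ S := ⟨⟨le_trans hs0 (le_of_lt h1), h2⟩, h⟩
    exact absurd (le_csSup hScomp.bddAbove hmem) (not_le.2 h1)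
  have key := f.queue_sub e s θ
  have hnn : 0 ≤ ∫ ζ in s..θ, (f.fp e ζ - f.fm e (ζ + (N.tau e : ℝ))) := by
    apply intervalIntegral.integral_nonneg_of_ae_restrict hsθ
    filter_upwards [ae_restrict_of_ae (hf.2.2.2 e), ae_restrict_of_ae (Network.Flow.ae_ne' s),
      MeasureTheory.ae_restrict_mem measurableSet_Icc] with ζ h1 h2 h3
    have hζs : s < ζ := lt_of_le_of_ne h3.1 (Ne.symm h2)
    have hζ0 : (0:ℝ) ≤ ζ := le_trans hs0 (le_of_lt hζs)
    have hq : f.queue e ζ ≤ 0 := le_of_lt (hub ζ ⟨hζs, h3.2⟩)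
    simp only [Pi.zero_apply]
    have := (h1 hζ0).2 hq
    rw [this]
    have : min (f.fp e ζ) ((N.nu e : ℝ)) ≤ f.fp e ζ := min_le_left _ _
    linarith
  have : f.queue e θ < 0 := hneg
  linarith

end Flow
end Network
namespace Network

variable {N : Network}

lemma isWalkBetween_append {v z w : N.V} {p q : List N.E}
    (hp : N.IsWalkBetween v z p) (hq : N.IsWalkBetween z w q) :
    N.IsWalkBetween v w (p ++ q) := by
  induction p generalizing v with
  | nil => cases hp; simpa using hq
  | cons e rest ih =>
    obtain ⟨h1, h2⟩ := hp
    exact ⟨h1, ih h2⟩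

lemma isWalkBetween_append_inv {v w : N.V} {p q : List N.E}
    (h : N.IsWalkBetween v w (p ++ q)) :
    ∃ z, N.IsWalkBetween v z p ∧ N.IsWalkBetween z w q := by
  induction p generalizing v with
  | nil => exact ⟨v, rfl, h⟩
  | cons e rest ih =>
    obtain ⟨h1, h2⟩ := h
    obtain ⟨z, hz1, hz2⟩ := ih h2
    exact ⟨z, ⟨h1, hz1⟩, hz2⟩

/-- natural-valued path length -/
def pathTauNat (N : Network) (p : List N.E) : ℕ := (p.map N.tau).sum

lemma pathTau_eq_cast (p : List N.E) : N.pathTau p = (N.pathTauNat p : ℝ) := by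
  rw [pathTau, pathTauNat, Nat.cast_list_sum, List.map_map]
  rfl

lemma pathTauNat_append (p q : List N.E) :
    N.pathTauNat (p ++ q) = N.pathTauNat p + N.pathTauNat q := by
  simp [pathTauNat]

lemma exists_nodup_walk {w : N.V} :
    ∀ (p : List N.E) (v : N.V), N.IsWalkBetween v w p →
    ∃ p', N.IsWalkBetween v w p' ∧ N.pathTauNat p' ≤ N.pathTauNat p ∧ p'.Nodup := by
  intro p
  induction p with
  | nil => intro v h; exact ⟨[], h, le_rfl, List.nodup_nil⟩
  | cons e rest ih =>
    intro v h
    obtain ⟨h1, h2⟩ := h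
    obtain ⟨r, hr, hrle, hrnd⟩ := ih (N.dst e) h2
    by_cases he : e ∈ r
    · obtain ⟨d, c, rfl⟩ := List.append_of_mem he
      obtain ⟨z, hz1, hz2⟩ := isWalkBetween_append_inv hr
      obtain ⟨hz3, hz4⟩ := hz2
      refine ⟨e :: c, ⟨h1, hz4⟩, ?_, ?_⟩
      · have : N.pathTauNat c ≤ N.pathTauNat rest := by
          have := N.pathTauNat_append d (e :: c)
          have h5 : N.pathTauNat (e :: c) = N.tau e + N.pathTauNat c := by
            simp [pathTauNat]
          omega
        have h6 : N.pathTauNat (e :: c) = N.tau e + N.pathTauNat c := by simp [pathTauNat]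
        have h7 : N.pathTauNat (e :: rest) = N.tau e + N.pathTauNat rest := by simp [pathTauNat]
        omega
      · have := hrnd.of_append_right
        exact this
    · refine ⟨e :: r, ⟨h1, hr⟩, ?_, List.nodup_cons.mpr ⟨he, hrnd⟩⟩
      have h6 : N.pathTauNat (e :: r) = N.tau e + N.pathTauNat r := by simp [pathTauNat]
      have h7 : N.pathTauNat (e :: rest) = N.tau e + N.pathTauNat rest := by simp [pathTauNat]
      omega

lemma exists_physShortest_nodup (hreach : N.Reachable) (v : N.V) :
    ∃ p, N.PhysShortest v p ∧ p.Nodup := by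
  set S : Set ℕ := {n | ∃ p, N.IsWalk v p ∧ N.pathTauNat p = n} with hS
  obtain ⟨q, hq⟩ := hreach v
  have hne : S.Nonempty := ⟨N.pathTauNat q, q, hq, rfl⟩
  obtain ⟨p₀, hw₀, htau₀⟩ := Nat.sInf_mem hne
  obtain ⟨p₁, hw₁, hle₁, hnd₁⟩ := exists_nodup_walk p₀ v hw₀
  refine ⟨p₁, ⟨hw₁, ?_⟩, hnd₁⟩
  intro p' hp'
  rw [pathTau_eq_cast, pathTau_eq_cast]
  have h1 : sInf S ≤ N.pathTauNat p' := Nat.sInf_le ⟨p', hp', rfl⟩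
  have : N.pathTauNat p₁ ≤ N.pathTauNat p' := by omega
  exact_mod_cast this

namespace Flow

variable (f : N.Flow)

lemma c_nonneg (hf : f.Feasible) (e : N.E) (θ : ℝ) : 0 ≤ f.c e θ := by
  have h1 := f.queue_nonneg hf e θ
  have h2 : (0:ℝ) ≤ (N.tau e : ℝ) := Nat.cast_nonneg _
  have h3 : (0:ℝ) ≤ (N.nu e : ℝ) := Nat.cast_nonneg _
  have := div_nonneg h1 h3
  simp only [c]
  linarith

lemma tau_le_c (hf : f.Feasible) (e : N.E) (θ : ℝ) : (N.tau e : ℝ) ≤ f.c e θ := by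
  have h1 := f.queue_nonneg hf e θ
  have h3 : (0:ℝ) ≤ (N.nu e : ℝ) := Nat.cast_nonneg _
  have := div_nonneg h1 h3
  simp only [c]
  linarith

lemma sum_c_nonneg (hf : f.Feasible) (p : List N.E) (θ : ℝ) :
    0 ≤ (p.map fun e => f.c e θ).sum := by
  apply List.sum_nonneg
  intro x hx
  obtain ⟨e, _, rfl⟩ := List.mem_map.1 hx
  exact f.c_nonneg hf e θ

lemma label_le (hf : f.Feasible) {v : N.V} {p : List N.E} (h : N.IsWalk v p) (θ : ℝ) :
    f.label v θ ≤ (p.map fun e => f.c e θ).sum := by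
  rw [label]
  refine csInf_le ⟨0, ?_⟩ ⟨p, h, rfl⟩
  rintro x ⟨q, hq, rfl⟩
  exact f.sum_c_nonneg hf q θ

lemma label_sink (hf : f.Feasible) (θ : ℝ) : f.label N.sink θ = 0 := by
  apply le_antisymm
  · have h : N.IsWalk N.sink ([] : List N.E) := rfl
    simpa using f.label_le hf h θ
  · rw [label]
    refine le_csInf ⟨0, [], rfl, by simp⟩ ?_
    rintro x ⟨q, hq, rfl⟩
    exact f.sum_c_nonneg hf q θ

lemma sum_c_of_active (hf : f.Feasible) (θ : ℝ) :
    ∀ (p : List N.E) (v : N.V), N.IsWalkBetween v N.sink p → (∀ e ∈ p, f.Active e θ) →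
    (p.map fun e => f.c e θ).sum = f.label v θ := by
  intro p
  induction p with
  | nil =>
    intro v h _
    cases h
    simp [f.label_sink hf θ]
  | cons e rest ih =>
    intro v h hact
    obtain ⟨h1, h2⟩ := h
    have hrest := ih (N.dst e) h2 (fun x hx => hact x (List.mem_cons_of_mem e hx))
    have he : f.Active e θ := hact e (List.mem_cons_self (a := e) (l := rest))
    rw [List.map_cons, List.sum_cons, hrest, ← h1]
    rw [Active] at he
    linarith

end Flow
end Network
namespace Network
namespace Flow

variable {N : Network} (f : N.Flow)

set_option maxHeartbeats 1600000 in
lemma load_sum_lt (hf : f.Feasible) (T : Finset N.V) {θ1 θ2 θ : ℝ}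
    (hsl : f.SinkLike T θ1 θ2) (hθ1 : θ1 ≤ θ) (hθ2 : θ ≤ θ2) :
    ∑ e ∈ N.edgesIn T, f.load e θ < 1/2 := by
  obtain ⟨hsink, _, hbound⟩ := hsl
  have hθ12 : θ1 ≤ θ2 := le_trans hθ1 hθ2
  set A := N.edgesIn T with hA
  set B := N.deltaMinus T with hB
  set R := T.erase N.sink with hR
  -- pointwise a.e. inequality
  have hae : ∀ᵐ ζ ∂(volume : Measure ℝ),
      (∑ e ∈ A, (f.fp e ζ - f.fm e ζ)) ≤ (∑ e ∈ B, f.fm e ζ) + ∑ v ∈ R, N.u v ζ := by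
    have hcons : ∀ᵐ ζ ∂(volume : Measure ℝ), ∀ v ∈ R, 0 ≤ ζ →
        (∑ e ∈ N.outEdges v, f.fp e ζ) - ∑ e ∈ N.inEdges v, f.fm e ζ = N.u v ζ :=
      (Filter.eventually_all_finset R).2 fun v hv => hf.1 v (Finset.ne_of_mem_erase hv)
    filter_upwards [hcons, hf.2.1] with ζ h1 h2
    have hBnn : 0 ≤ ∑ e ∈ B, f.fm e ζ := Finset.sum_nonneg fun e _ => f.fm_nonneg e ζ
    have hunn : 0 ≤ ∑ v ∈ R, N.u v ζ := Finset.sum_nonneg fun v _ => N.u_nonneg v ζ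
    rcases lt_or_ge ζ 0 with hζ | hζ
    · have hfp : ∀ e : N.E, f.fp e ζ = 0 := fun e => f.fp_zero e ζ hζ
      have : ∑ e ∈ A, (f.fp e ζ - f.fm e ζ) ≤ 0 :=
        Finset.sum_nonpos fun e _ => by
          rw [hfp e]; simpa using f.fm_nonneg e ζ
      linarith
    · -- 0 ≤ ζ : conservation
      have hT : ∑ v ∈ T, ((∑ e ∈ N.outEdges v, f.fp e ζ) - ∑ e ∈ N.inEdges v, f.fm e ζ)
          ≤ ∑ v ∈ R, N.u v ζ := by
        rw [← Finset.sum_erase_add T _ hsink, ← hR]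
        have hr : ∑ v ∈ R, ((∑ e ∈ N.outEdges v, f.fp e ζ) - ∑ e ∈ N.inEdges v, f.fm e ζ)
            = ∑ v ∈ R, N.u v ζ := Finset.sum_congr rfl fun v hv => h1 v hv hζ
        have hs := h2 hζ
        linarith [hr]
      have hout : ∑ v ∈ T, ∑ e ∈ N.outEdges v, f.fp e ζ
          = ∑ e ∈ Finset.univ.filter (fun e => N.src e ∈ T), f.fp e ζ := by
        rw [← Finset.sum_fiberwise_of_maps_to (g := N.src)
          (fun e he => (Finset.mem_filter.1 he).2) (f.fp · ζ)]
        apply Finset.sum_congr rfl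
        intro v hv
        apply Finset.sum_congr _ (fun _ _ => rfl)
        ext e
        simp only [Finset.mem_filter, Finset.mem_univ, true_and, outEdges]
        exact ⟨fun hh => ⟨hh ▸ hv, hh⟩, fun hh => hh.2⟩
      have hin : ∑ v ∈ T, ∑ e ∈ N.inEdges v, f.fm e ζ
          = ∑ e ∈ Finset.univ.filter (fun e => N.dst e ∈ T), f.fm e ζ := by
        rw [← Finset.sum_fiberwise_of_maps_to (g := N.dst)
          (fun e he => (Finset.mem_filter.1 he).2) (f.fm · ζ)]
        apply Finset.sum_congr rfl
        intro v hv
        apply Finset.sum_congr _ (fun _ _ => rfl)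
        ext e
        simp only [Finset.mem_filter, Finset.mem_univ, true_and, inEdges]
        exact ⟨fun hh => ⟨hh ▸ hv, hh⟩, fun hh => hh.2⟩
      have hsplit1 : ∑ e ∈ Finset.univ.filter (fun e => N.src e ∈ T), f.fp e ζ
          = ∑ e ∈ A, f.fp e ζ + ∑ e ∈ N.deltaPlus T, f.fp e ζ := by
        rw [← Finset.sum_filter_add_sum_filter_not
          (Finset.univ.filter (fun e => N.src e ∈ T)) (fun e => N.dst e ∈ T)]
        congr 1
        · apply Finset.sum_congr _ (fun _ _ => rfl)
          rw [Finset.filter_filter, hA]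
          rfl
        · apply Finset.sum_congr _ (fun _ _ => rfl)
          rw [Finset.filter_filter]
          rfl
      have hsplit2 : ∑ e ∈ Finset.univ.filter (fun e => N.dst e ∈ T), f.fm e ζ
          = ∑ e ∈ B, f.fm e ζ + ∑ e ∈ A, f.fm e ζ := by
        rw [← Finset.sum_filter_add_sum_filter_not
          (Finset.univ.filter (fun e => N.dst e ∈ T)) (fun e => N.src e ∈ T)]
        rw [add_comm]
        congr 1
        · apply Finset.sum_congr _ (fun _ _ => rfl)
          rw [Finset.filter_filter, hB]
          apply Finset.filter_congr
          intro e _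
          simp [and_comm]
        · apply Finset.sum_congr _ (fun _ _ => rfl)
          rw [Finset.filter_filter, hA]
          apply Finset.filter_congr
          intro e _
          simp [and_comm]
      have hdp : 0 ≤ ∑ e ∈ N.deltaPlus T, f.fp e ζ :=
        Finset.sum_nonneg fun e _ => f.fp_nonneg e ζ
      have hsum : ∑ e ∈ A, (f.fp e ζ - f.fm e ζ)
          = ∑ e ∈ A, f.fp e ζ - ∑ e ∈ A, f.fm e ζ := Finset.sum_sub_distrib _ _
      have hTrw : ∑ v ∈ T, ((∑ e ∈ N.outEdges v, f.fp e ζ) - ∑ e ∈ N.inEdges v, f.fm e ζ)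
          = ∑ v ∈ T, ∑ e ∈ N.outEdges v, f.fp e ζ - ∑ v ∈ T, ∑ e ∈ N.inEdges v, f.fm e ζ :=
        Finset.sum_sub_distrib _ _
      rw [hTrw, hout, hin, hsplit1, hsplit2] at hT
      linarith
  -- integrability of the two sides
  have hint1 : IntervalIntegrable (fun ζ => ∑ e ∈ A, (f.fp e ζ - f.fm e ζ)) volume θ1 θ := by
    have h := IntervalIntegrable.sum A
      (f := fun e ζ => f.fp e ζ - f.fm e ζ) (μ := volume) (a := θ1) (b := θ)
      (fun e _ => (f.fp_intInt e θ1 θ).sub (f.fm_intInt e θ1 θ))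
    have heq : (∑ e ∈ A, fun ζ => f.fp e ζ - f.fm e ζ)
        = fun ζ => ∑ e ∈ A, (f.fp e ζ - f.fm e ζ) := by
      funext ζ; simp
    rwa [heq] at h
  have hintB : IntervalIntegrable (fun ζ => ∑ e ∈ B, f.fm e ζ) volume θ1 θ := by
    have h := IntervalIntegrable.sum B
      (f := fun e ζ => f.fm e ζ) (μ := volume) (a := θ1) (b := θ)
      (fun e _ => f.fm_intInt e θ1 θ)
    have heq : (∑ e ∈ B, fun ζ => f.fm e ζ) = fun ζ => ∑ e ∈ B, f.fm e ζ := by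
      funext ζ; simp
    rwa [heq] at h
  have hintR : IntervalIntegrable (fun ζ => ∑ v ∈ R, N.u v ζ) volume θ1 θ := by
    have h := IntervalIntegrable.sum R
      (f := fun v ζ => N.u v ζ) (μ := volume) (a := θ1) (b := θ)
      (fun v _ => (N.u_integrable v).intervalIntegrable)
    have heq : (∑ v ∈ R, fun ζ => N.u v ζ) = fun ζ => ∑ v ∈ R, N.u v ζ := by
      funext ζ; simp
    rwa [heq] at h
  have hint2 : IntervalIntegrable
      (fun ζ => (∑ e ∈ B, f.fm e ζ) + ∑ v ∈ R, N.u v ζ) volume θ1 θ := hintB.add hintR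
  have hmono : (∫ ζ in θ1..θ, ∑ e ∈ A, (f.fp e ζ - f.fm e ζ))
      ≤ ∫ ζ in θ1..θ, ((∑ e ∈ B, f.fm e ζ) + ∑ v ∈ R, N.u v ζ) :=
    intervalIntegral.integral_mono_ae hθ1 hint1 hint2 hae
  have hLHS : ∫ ζ in θ1..θ, (∑ e ∈ A, (f.fp e ζ - f.fm e ζ))
      = ∑ e ∈ A, f.load e θ - ∑ e ∈ A, f.load e θ1 := by
    rw [intervalIntegral.integral_finset_sum
      (fun e _ => (f.fp_intInt e θ1 θ).sub (f.fm_intInt e θ1 θ))]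
    rw [← Finset.sum_sub_distrib]
    apply Finset.sum_congr rfl
    intro e _
    rw [intervalIntegral.integral_sub (f.fp_intInt e θ1 θ) (f.fm_intInt e θ1 θ)]
    have h1 := f.Fp_sub e θ1 θ
    have h2 := f.Fm_sub e θ1 θ
    simp only [load]
    linarith
  have hRHS : ∫ ζ in θ1..θ, ((∑ e ∈ B, f.fm e ζ) + ∑ v ∈ R, N.u v ζ)
      = ∑ e ∈ B, (f.Fm e θ - f.Fm e θ1) + ∑ v ∈ R, ∫ ζ in θ1..θ, N.u v ζ := by
    rw [intervalIntegral.integral_add hintB hintR]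
    congr 1
    · rw [intervalIntegral.integral_finset_sum (fun e _ => f.fm_intInt e θ1 θ)]
      exact Finset.sum_congr rfl fun e _ => (f.Fm_sub e θ1 θ).symm
    · rw [intervalIntegral.integral_finset_sum
        (fun v _ => (N.u_integrable v).intervalIntegrable)]
  -- compare with the θ2 versions
  have hFm2 : ∀ e ∈ B, f.Fm e θ - f.Fm e θ1 ≤ f.Fm e θ2 - f.Fm e θ1 := fun e _ => by
    have := f.Fm_mono e hθ2
    linarith
  have hu2 : ∀ v ∈ R, (∫ ζ in θ1..θ, N.u v ζ) ≤ ∫ ζ in θ1..θ2, N.u v ζ := fun v _ => by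
    have hsplit : (∫ ζ in θ1..θ, N.u v ζ) + (∫ ζ in θ..θ2, N.u v ζ)
        = ∫ ζ in θ1..θ2, N.u v ζ :=
      intervalIntegral.integral_add_adjacent_intervals
        ((N.u_integrable v).intervalIntegrable) ((N.u_integrable v).intervalIntegrable)
    have hnn : 0 ≤ ∫ ζ in θ..θ2, N.u v ζ :=
      intervalIntegral.integral_nonneg hθ2 fun x _ => N.u_nonneg v x
    linarith
  have hB2 : ∑ e ∈ B, (f.Fm e θ - f.Fm e θ1) ≤ ∑ e ∈ B, (f.Fm e θ2 - f.Fm e θ1) :=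
    Finset.sum_le_sum hFm2
  have hu3 : ∑ v ∈ R, (∫ ζ in θ1..θ, N.u v ζ) ≤ ∑ v ∈ R, ∫ ζ in θ1..θ2, N.u v ζ :=
    Finset.sum_le_sum hu2
  rw [hLHS, hRHS] at hmono
  linarith

end Flow
end Network
lemma List.sum_map_add' {α : Type*} (l : List α) (f g : α → ℝ) :
    (l.map fun x => f x + g x).sum = (l.map f).sum + (l.map g).sum := by
  induction l with
  | nil => simp
  | cons a t ih => simp [ih]; ring

theorem sinkLike_only_shortest_active' (N : Network) (hreach : N.Reachable)
    (f : N.Flow) (hf : f.Feasible) (T : Finset N.V) (θ1 θ2 : ℝ)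
    (hsl : f.SinkLike T θ1 θ2) (θ : ℝ) (hθ1 : θ1 ≤ θ) (hθ2 : θ ≤ θ2)
    (v : N.V) (hv : v ∈ T) (p : List N.E) (hp : f.ActivePath v p θ) :
    N.PhysShortest v p := by
  obtain ⟨hwalk, hact⟩ := hp
  obtain ⟨p₁, hps₁, hnd₁⟩ := N.exists_physShortest_nodup hreach v
  have hshort := hsl.2.1
  have hq : ∀ e θ', 0 ≤ f.queue e θ' := fun e θ' => f.queue_nonneg hf e θ'
  -- step 1 : pathTau p ≤ label v θ
  have h1 : N.pathTau p ≤ (p.map fun e => f.c e θ).sum := by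
    rw [Network.pathTau]
    exact List.sum_le_sum fun e _ => f.tau_le_c hf e θ
  have h2 : (p.map fun e => f.c e θ).sum = f.label v θ :=
    f.sum_c_of_active hf θ p v hwalk hact
  -- step 2 : label v θ ≤ pathTau p₁ + queue terms
  have h3 : f.label v θ ≤ (p₁.map fun e => f.c e θ).sum := f.label_le hf hps₁.1 θ
  have h4 : (p₁.map fun e => f.c e θ).sum
      = N.pathTau p₁ + (p₁.map fun e => f.queue e θ / (N.nu e : ℝ)).sum := by
    rw [Network.pathTau, ← List.sum_map_add']
    rfl
  -- step 3 : queue terms small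
  have hsub : p₁.toFinset ⊆ N.edgesIn T := by
    intro e he
    rw [List.mem_toFinset] at he
    obtain ⟨hsrc, hdst⟩ := hshort v hv p₁ hps₁ e he
    simp [Network.edgesIn, hsrc, hdst]
  have h5 : (p₁.map fun e => f.queue e θ / (N.nu e : ℝ)).sum
      ≤ ∑ e ∈ N.edgesIn T, f.queue e θ / (N.nu e : ℝ) := by
    rw [← List.sum_toFinset _ hnd₁]
    exact Finset.sum_le_sum_of_subset_of_nonneg hsub
      (fun e _ _ => div_nonneg (hq e θ) (Nat.cast_nonneg _))
  have h6 : ∑ e ∈ N.edgesIn T, f.queue e θ / (N.nu e : ℝ)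
      ≤ ∑ e ∈ N.edgesIn T, f.load e θ := by
    apply Finset.sum_le_sum
    intro e _
    have hν : (1:ℝ) ≤ (N.nu e : ℝ) := by exact_mod_cast N.nu_pos e
    have hd : f.queue e θ / (N.nu e : ℝ) ≤ f.queue e θ := div_le_self (hq e θ) hν
    have hm : f.Fm e θ ≤ f.Fm e (θ + (N.tau e : ℝ)) :=
      f.Fm_mono e (by have : (0:ℝ) ≤ (N.tau e : ℝ) := Nat.cast_nonneg _; linarith)
    have : f.queue e θ ≤ f.load e θ := by
      simp only [Network.Flow.queue, Network.Flow.load]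
      linarith
    linarith
  have h7 := f.load_sum_lt hf T hsl hθ1 hθ2
  -- combine : pathTau p < pathTau p₁ + 1/2
  have hlt : N.pathTau p < N.pathTau p₁ + 1/2 := by linarith
  rw [N.pathTau_eq_cast p, N.pathTau_eq_cast p₁] at hlt
  have hnat : N.pathTauNat p ≤ N.pathTauNat p₁ := by
    by_contra hcon
    push_neg at hcon
    have : (N.pathTauNat p₁ : ℝ) + 1 ≤ (N.pathTauNat p : ℝ) := by exact_mod_cast hcon
    linarith
  refine ⟨hwalk, fun p' hp' => ?_⟩
  have := hps₁.2 p' hp'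
  rw [N.pathTau_eq_cast p, N.pathTau_eq_cast p₁] at *
  calc ((N.pathTauNat p : ℝ)) ≤ (N.pathTauNat p₁ : ℝ) := by exact_mod_cast hnat
    _ ≤ N.pathTau p' := this

/-- inside a sink-like subgraph, during its interval only
physically shortest paths towards the sink can be active. -/
theorem sinkLike_only_shortest_active (N : Network) (hreach : N.Reachable)
    (f : N.Flow) (hf : f.Feasible) (T : Finset N.V) (θ1 θ2 : ℝ)
    (hsl : f.SinkLike T θ1 θ2) (θ : ℝ) (hθ1 : θ1 ≤ θ) (hθ2 : θ ≤ θ2)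
    (v : N.V) (hv : v ∈ T) (p : List N.E) (hp : f.ActivePath v p θ) :
    N.PhysShortest v p :=
  sinkLike_only_shortest_active' N hreach f hf T θ1 θ2 hsl θ hθ1 hθ2 v hv p hp

end
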